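/- Let Ω be the torus, V ≥ 0 bounded, and u the landscape solving -Δu + Vu = 1 with periodic boundary conditions. Then for every periodic f ∈ W^{1,2}(Ω): ∫_Ω |∇f|² + V f² dx ≥ ∫_Ω (1/u) f² dx. -/

import Mathlib

open MeasureTheory Set

/-- Pointwise Laplacian of `u : ℝ^d → ℝ`. -/
noncomputable def lap {d : ℕ} (u : EuclideanSpace ℝ (Fin d) → ℝ)
    (x : EuclideanSpace ℝ (Fin d)) : ℝ :=
  ∑ i : Fin d, fderiv ℝ (fun y => fderiv ℝ u y (EuclideanSpace.single i 1)) x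
    (EuclideanSpace.single i 1)

/-- Periodicity with respect to the lattice `R₀ ℤ^d`. -/
def IsPeriodic {d : ℕ} (R₀ : ℝ) (f : EuclideanSpace ℝ (Fin d) → ℝ) : Prop :=
  ∀ (x : EuclideanSpace ℝ (Fin d)) (i : Fin d),
    f (x + R₀ • EuclideanSpace.single i 1) = f x

/-- A fundamental domain `[0,R₀)^d` of the torus `(ℝ/R₀ℤ)^d`. -/
def fund (d : ℕ) (R₀ : ℝ) : Set (EuclideanSpace ℝ (Fin d)) :=
  {x | ∀ i, x i ∈ Ico (0 : ℝ) R₀}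

/-!
With the vector field `G = (f² / u) ∇u` (`landscapeField u f`), the equation `-Δu + V u = 1`
gives pointwise `|∇f|² + V f² - f² / u - div G = |∇f - (f / u) ∇u|² ≥ 0` (the ground-state
transform `f = u · (f / u)`). Since `G` is periodic, `∫ div G = 0` over a period cell by the
divergence theorem, and integrating the pointwise inequality gives the claim.
-/

noncomputable def divergence {d : ℕ} (F : Fin d → EuclideanSpace ℝ (Fin d) → ℝ)
    (x : EuclideanSpace ℝ (Fin d)) : ℝ :=
  ∑ i, fderiv ℝ (F i) x (EuclideanSpace.single i 1)

lemma Function.Periodic.fderiv {𝕜 E F : Type*} [NontriviallyNormedField 𝕜]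
    [NormedAddCommGroup E] [NormedSpace 𝕜 E] [NormedAddCommGroup F] [NormedSpace 𝕜 F]
    {g : E → F} {c : E} (hg : Function.Periodic g c) : Function.Periodic (fderiv 𝕜 g) c :=
  fun x => by rw [← fderiv_comp_add_right, funext hg]

lemma norm_gradient_sq_eq_sum {ι : Type*} [Fintype ι] [DecidableEq ι]
    (f : EuclideanSpace ℝ ι → ℝ) (x : EuclideanSpace ℝ ι) :
    ‖gradient f x‖ ^ 2 = ∑ i, fderiv ℝ f x (EuclideanSpace.single i 1) ^ 2 := by
  simp [EuclideanSpace.norm_sq_eq, ← inner_gradient_left, EuclideanSpace.inner_single_right]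

lemma fderiv_sq_div_mul_apply {E : Type*} [NormedAddCommGroup E] [NormedSpace ℝ E]
    {f u g : E → ℝ} {x : E} (hf : DifferentiableAt ℝ f x) (hu : DifferentiableAt ℝ u x)
    (hg : DifferentiableAt ℝ g x) (hux : u x ≠ 0) (v : E) :
    fderiv ℝ (fun y => f y ^ 2 / u y * g y) x v =
      f x ^ 2 / u x * fderiv ℝ g x v
        + g x * (2 * f x * fderiv ℝ f x v / u x - f x ^ 2 * fderiv ℝ u x v / u x ^ 2) := by
  have hinv : HasFDerivAt (fun y => (u y)⁻¹) ((-(u x ^ 2)⁻¹) • fderiv ℝ u x) x :=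
    (hasDerivAt_inv hux).comp_hasFDerivAt x hu.hasFDerivAt
  simp only [div_eq_mul_inv]
  rw [(((hf.hasFDerivAt.pow 2).fun_mul hinv).fun_mul hg.hasFDerivAt).fderiv]
  simp
  field_simp
  ring

lemma ground_state_sum_le {ι : Type*} (s : Finset ι) (a b c : ι → ℝ) {f u V : ℝ}
    (hu : u ≠ 0) (hc : ∑ i ∈ s, c i = V * u - 1) :
    1 / u * f ^ 2 + ∑ i ∈ s, (f ^ 2 / u * c i + b i * (2 * f * a i / u - f ^ 2 * b i / u ^ 2))
      ≤ ∑ i ∈ s, a i ^ 2 + V * f ^ 2 := by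
  have hterm : ∀ i ∈ s, b i * (2 * f * a i / u - f ^ 2 * b i / u ^ 2) ≤ a i ^ 2 := by
    intro i _
    have e : b i * (2 * f * a i / u - f ^ 2 * b i / u ^ 2)
        = 2 * (f / u * b i) * a i - (f / u * b i) ^ 2 := by field_simp
    linarith [two_mul_le_add_sq (f / u * b i) (a i)]
  have hV : f ^ 2 / u * (V * u - 1) = V * f ^ 2 - 1 / u * f ^ 2 := by field_simp
  rw [Finset.sum_add_distrib, ← Finset.mul_sum, hc, hV]
  linarith [Finset.sum_le_sum hterm]

lemma fund_eq_preimage_ofLp (d : ℕ) (R : ℝ) :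
    fund d R = WithLp.ofLp ⁻¹' Set.pi univ fun _ : Fin d => Ico 0 R := by
  ext x
  simp [fund]

lemma measurableSet_fund (d : ℕ) (R : ℝ) : MeasurableSet (fund d R) := by
  rw [fund_eq_preimage_ofLp]
  exact (MeasurableEquiv.toLp 2 (Fin d → ℝ)).symm.measurable
    (MeasurableSet.univ_pi fun _ => measurableSet_Ico)

lemma integrableOn_fund {E : Type*} [NormedAddCommGroup E] {d : ℕ} {R : ℝ}
    {g : EuclideanSpace ℝ (Fin d) → E} (hg : Continuous g) : IntegrableOn g (fund d R) := by
  have hK : IsCompact (WithLp.toLp 2 '' Icc (0 : Fin d → ℝ) (fun _ => R)) :=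
    isCompact_Icc.image (PiLp.continuous_toLp 2 _)
  refine (hg.continuousOn.integrableOn_compact hK).mono_set fun x hx => ?_
  exact ⟨WithLp.ofLp x, ⟨fun i => (hx i).1, fun i => (hx i).2.le⟩, rfl⟩

lemma setIntegral_fund_eq_integral_Icc {E : Type*} [NormedAddCommGroup E] [NormedSpace ℝ E]
    (d : ℕ) (R : ℝ) (g : EuclideanSpace ℝ (Fin d) → E) :
    ∫ x in fund d R, g x = ∫ p in Icc (0 : Fin d → ℝ) (fun _ => R), g (WithLp.toLp 2 p) := by
  rw [fund_eq_preimage_ofLp, (PiLp.volume_preserving_ofLp (Fin d)).setIntegral_preimage_emb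
    (MeasurableEquiv.toLp 2 (Fin d → ℝ)).symm.measurableEmbedding (fun p => g (WithLp.toLp 2 p))]
  exact setIntegral_congr_set Measure.univ_pi_Ico_ae_eq_Icc

lemma integral_fund_divergence_eq_zero {d : ℕ} {R : ℝ} (hR : 0 ≤ R)
    {F : Fin d → EuclideanSpace ℝ (Fin d) → ℝ} (hF : ∀ i, ContDiff ℝ 1 (F i))
    (hper : ∀ i, Function.Periodic (F i) (R • EuclideanSpace.single i 1)) :
    ∫ x in fund d R, divergence F x = 0 := by
  cases d with
  | zero => simp [divergence]
  | succ n =>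
    let L := (EuclideanSpace.equiv (Fin (n + 1)) ℝ).symm
    have hface : ∀ i (y : Fin n → ℝ), F i (L (i.insertNth R y)) = F i (L (i.insertNth 0 y)) := by
      intro i y
      have : i.insertNth R y = i.insertNth 0 y + (Pi.single i R : Fin (n + 1) → ℝ) := by
        rw [← sub_eq_iff_eq_add', Fin.insertNth_sub_same, sub_zero]
      rw [this, map_add]
      convert hper i (L (i.insertNth 0 y)) using 3
      simp [L, ← PiLp.toLp_single, ← WithLp.toLp_smul, ← Pi.single_smul]
    have hdiv := integral_divergence_of_hasFDerivAt_off_countable' 0 (fun _ => R) (fun _ => hR)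
      (fun i p => F i (L p)) (fun i p => (fderiv ℝ (F i) (L p)).comp (L : _ →L[ℝ] _))
      ∅ countable_empty (fun i => ((hF i).continuous.comp L.continuous).continuousOn)
      (fun p _ i => ((hF i).differentiable one_ne_zero (L p)).hasFDerivAt.comp p L.hasFDerivAt)
      (Continuous.integrableOn_Icc (by
        have := fun i => (hF i).continuous_fderiv one_ne_zero
        fun_prop))
    simp only [ContinuousLinearMap.comp_apply, Pi.zero_apply, hface, sub_self,
      Finset.sum_const_zero] at hdiv
    rw [setIntegral_fund_eq_integral_Icc, ← hdiv]
    simp [L, divergence, PiLp.toLp_single]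

lemma continuous_divergence {d : ℕ} {F : Fin d → EuclideanSpace ℝ (Fin d) → ℝ}
    (hF : ∀ i, ContDiff ℝ 1 (F i)) : Continuous (divergence F) :=
  continuous_finsetSum _ fun i _ => ((hF i).continuous_fderiv one_ne_zero).clm_apply
    continuous_const

noncomputable def landscapeField {d : ℕ} (u f : EuclideanSpace ℝ (Fin d) → ℝ) (i : Fin d)
    (x : EuclideanSpace ℝ (Fin d)) : ℝ :=
  f x ^ 2 / u x * fderiv ℝ u x (EuclideanSpace.single i 1)

section Landscape

variable {d : ℕ} {u f V : EuclideanSpace ℝ (Fin d) → ℝ}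

lemma contDiff_partial (hu : ContDiff ℝ 2 u) (i : Fin d) :
    ContDiff ℝ 1 fun x => fderiv ℝ u x (EuclideanSpace.single i 1) :=
  (hu.fderiv_right le_rfl).clm_apply contDiff_const

lemma continuous_lap (hu : ContDiff ℝ 2 u) : Continuous (lap u) := by
  have := fun i => (contDiff_partial hu i).continuous_fderiv one_ne_zero
  unfold lap
  fun_prop

lemma continuous_of_neg_lap_add_mul_eq_one (hu : ContDiff ℝ 2 u) (hu0 : ∀ x, u x ≠ 0)
    (hueq : ∀ x, -lap u x + V x * u x = 1) : Continuous V := by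
  have hV : V = fun x => (1 + lap u x) / u x := by
    ext x
    field_simp [hu0 x]
    linarith [hueq x]
  rw [hV]
  exact (continuous_const.add (continuous_lap hu)).div hu.continuous hu0

lemma contDiff_landscapeField (hu : ContDiff ℝ 2 u) (hf : ContDiff ℝ 1 f)
    (hu0 : ∀ x, u x ≠ 0) (i : Fin d) : ContDiff ℝ 1 (landscapeField u f i) :=
  ((hf.pow 2).div (hu.of_le one_le_two) hu0).mul (contDiff_partial hu i)

lemma periodic_landscapeField {c : EuclideanSpace ℝ (Fin d)} (hu : Function.Periodic u c)
    (hf : Function.Periodic f c) (i : Fin d) : Function.Periodic (landscapeField u f i) c :=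
  fun x => by simp only [landscapeField, hu x, hf x, hu.fderiv x]

lemma ground_state_le (hu : ContDiff ℝ 2 u) (hf : ContDiff ℝ 1 f) (hu0 : ∀ x, u x ≠ 0)
    (x : EuclideanSpace ℝ (Fin d)) (hueq : -lap u x + V x * u x = 1) :
    1 / u x * f x ^ 2 + divergence (landscapeField u f) x ≤
      ‖gradient f x‖ ^ 2 + V x * f x ^ 2 := by
  have hpartial (i : Fin d) : fderiv ℝ (landscapeField u f i) x (EuclideanSpace.single i 1) = _ :=
    fderiv_sq_div_mul_apply (hf.differentiable one_ne_zero x) (hu.differentiable two_ne_zero x)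
      ((contDiff_partial hu i).differentiable one_ne_zero x) (hu0 x) _
  rw [norm_gradient_sq_eq_sum, divergence, Finset.sum_congr rfl fun i _ => hpartial i]
  unfold lap at hueq
  exact ground_state_sum_le _ _ _ _ (hu0 x) (by linarith)

end Landscape

theorem landscape_uncertainty_principle_general (d : ℕ) (R₀ : ℕ)
    (V u f : EuclideanSpace ℝ (Fin d) → ℝ)
    (hu : ContDiff ℝ 2 u) (huper : IsPeriodic (R₀ : ℝ) u) (hupos : ∀ x, 0 < u x)
    (hueq : ∀ x, -lap u x + V x * u x = 1)
    (hf : ContDiff ℝ 1 f) (hfper : IsPeriodic (R₀ : ℝ) f) :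
    ∫ x in fund d (R₀ : ℝ), (1 / u x) * f x ^ 2 ≤
      ∫ x in fund d (R₀ : ℝ), (‖gradient f x‖ ^ 2 + V x * f x ^ 2) := by
  have hu0 : ∀ x, u x ≠ 0 := fun x => (hupos x).ne'
  have hG := contDiff_landscapeField hu hf hu0
  have hdivG : ∫ x in fund d R₀, divergence (landscapeField u f) x = 0 :=
    integral_fund_divergence_eq_zero R₀.cast_nonneg hG fun i =>
      periodic_landscapeField (fun x => huper x i) (fun x => hfper x i) i
  have hlhs : IntegrableOn (fun x => 1 / u x * f x ^ 2) (fund d R₀) :=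
    integrableOn_fund ((continuous_const.div hu.continuous hu0).mul (hf.continuous.pow 2))
  have hdiv : IntegrableOn (divergence (landscapeField u f)) (fund d R₀) :=
    integrableOn_fund (continuous_divergence hG)
  have hrhs : IntegrableOn (fun x => ‖gradient f x‖ ^ 2 + V x * f x ^ 2) (fund d R₀) := by
    have := continuous_of_neg_lap_add_mul_eq_one hu hu0 hueq
    have := hf.continuous_fderiv one_ne_zero
    simp only [norm_gradient_sq_eq_sum]
    exact integrableOn_fund (by fun_prop)
  calc ∫ x in fund d R₀, 1 / u x * f x ^ 2
      = ∫ x in fund d R₀, (1 / u x * f x ^ 2 + divergence (landscapeField u f) x) := by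
        rw [integral_add hlhs hdiv, hdivG, add_zero]
    _ ≤ ∫ x in fund d R₀, (‖gradient f x‖ ^ 2 + V x * f x ^ 2) :=
        setIntegral_mono_on (hlhs.add hdiv) hrhs (measurableSet_fund _ _)
          fun x _ => ground_state_le hu hf hu0 x (hueq x)

/-- the landscape inequality
`∫_Ω |∇f|² + V f² ≥ ∫_Ω (1/u) f²` for periodic `f`. -/
theorem landscape_uncertainty_principle (d : ℕ) (hd : 0 < d) (R₀ : ℕ) (hR : 0 < R₀)
    (V u f : EuclideanSpace ℝ (Fin d) → ℝ)
    (hVmeas : Measurable V) (hV0 : ∀ x, 0 ≤ V x) (hVbd : ∃ M, ∀ x, V x ≤ M)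
    (hVper : IsPeriodic (R₀ : ℝ) V)
    (hu : ContDiff ℝ 2 u) (huper : IsPeriodic (R₀ : ℝ) u) (hupos : ∀ x, 0 < u x)
    (hueq : ∀ x, -lap u x + V x * u x = 1)
    (hf : ContDiff ℝ 1 f) (hfper : IsPeriodic (R₀ : ℝ) f) :
    ∫ x in fund d (R₀ : ℝ), (1 / u x) * f x ^ 2 ≤
      ∫ x in fund d (R₀ : ℝ), (‖gradient f x‖ ^ 2 + V x * f x ^ 2) :=
  landscape_uncertainty_principle_general d R₀ V u f hu huper hupos hueq hf hfper
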